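/- arXiv:1511.08143 — 5 statements merged into one kernel-verified Lean document; each statement's English description precedes it below -/
import Mathlib

section
/- Let 0 < r < p < 1 and let E[n] be the sum of n i.i.d. Bernoulli(p) random variables. Then -lim_{n→∞} (1/n) log P(E[n] ≤ ⌈rn⌉ - 1) = D(r‖p), where D(r‖p) = r log(r/p) + (1-r) log((1-r)/(1-p)). -/
/-!
Write `T_j = C(n,j) p^j (1-p)^(n-j)` and `k = ⌈rn⌉ - 1`. Since `k < rn < pn`, the binomial terms
increase up to index `k`, so the tail sum `S` satisfies `T_k ≤ S ≤ (n+1) T_k`. Moreover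
`T_k = exp(-n D(k/n‖p)) · C(n,k) (k/n)^k (1-k/n)^(n-k)`, and the last factor lies in `[1/(n+1), 1]`
because `k` is the mode of Binomial(n, k/n) (method of types). Hence
`-(1/n) log S = D(k/n‖p) + O(log n / n)`, and `k/n → r` with `D(·‖p)` continuous at `r`.
-/

open Filter Real Finset Topology

noncomputable def binomTerm (x : ℝ) (n j : ℕ) : ℝ := n.choose j * x ^ j * (1 - x) ^ (n - j)

-- `binomCDF x n m = P(E[n] < m)`: the sum runs over `j < m`.
noncomputable def binomCDF (x : ℝ) (n m : ℕ) : ℝ := ∑ j ∈ range m, binomTerm x n j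

noncomputable def binKL (x p : ℝ) : ℝ := x * log (x / p) + (1 - x) * log ((1 - x) / (1 - p))

section binomTerm

variable {x : ℝ} {n j k : ℕ}

lemma binomTerm_nonneg (hx0 : 0 ≤ x) (hx1 : x ≤ 1) (n j : ℕ) : 0 ≤ binomTerm x n j := by
  have : 0 ≤ 1 - x := sub_nonneg.mpr hx1
  unfold binomTerm; positivity

lemma binomTerm_eq_zero_of_lt (h : n < j) : binomTerm x n j = 0 := by
  simp [binomTerm, Nat.choose_eq_zero_of_lt h]

lemma sum_range_succ_binomTerm (x : ℝ) (n : ℕ) : ∑ j ∈ range (n + 1), binomTerm x n j = 1 := by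
  have h := add_pow x (1 - x) n
  rw [add_sub_cancel, one_pow] at h
  rw [h]
  exact sum_congr rfl fun j _ => by unfold binomTerm; ring

lemma binomTerm_le_one (hx0 : 0 ≤ x) (hx1 : x ≤ 1) (hj : j ≤ n) : binomTerm x n j ≤ 1 := by
  rw [← sum_range_succ_binomTerm x n]
  exact single_le_sum (fun i _ => binomTerm_nonneg hx0 hx1 n i) (mem_range.mpr (by omega))

lemma binomTerm_succ_mul (x : ℝ) (hj : j < n) :
    binomTerm x n (j + 1) * ((1 - x) * (j + 1)) = binomTerm x n j * (x * (n - j)) := by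
  have hchoose : (n.choose (j + 1) : ℝ) * (j + 1) = n.choose j * (n - j) := by
    rw [← Nat.cast_sub hj.le]; exact_mod_cast Nat.choose_succ_right_eq n j
  have hpow : (1 - x) ^ (n - j) = (1 - x) ^ (n - (j + 1)) * (1 - x) := by
    rw [← pow_succ]; congr 1; omega
  unfold binomTerm
  rw [hpow]
  linear_combination (x ^ (j + 1) * (1 - x) ^ (n - (j + 1)) * (1 - x)) * hchoose

lemma binomTerm_le_succ (hx0 : 0 ≤ x) (hx1 : x < 1) (hj : (j + 1 : ℝ) ≤ x * (n + 1)) :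
    binomTerm x n j ≤ binomTerm x n (j + 1) := by
  have hjn : j < n := by
    have : (j : ℝ) < n := by nlinarith
    exact_mod_cast this
  have hpos : 0 < (1 - x) * (j + 1) := mul_pos (by linarith) (by positivity)
  refine le_of_mul_le_mul_right ?_ hpos
  rw [binomTerm_succ_mul x hjn]
  exact mul_le_mul_of_nonneg_left (by linarith) (binomTerm_nonneg hx0 hx1.le n j)

lemma binomTerm_succ_le (hx0 : 0 ≤ x) (hx1 : x < 1) (hj : x * (n + 1) ≤ j + 1) :
    binomTerm x n (j + 1) ≤ binomTerm x n j := by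
  rcases lt_or_ge j n with hjn | hnj
  · have hpos : 0 < (1 - x) * (j + 1) := mul_pos (by linarith) (by positivity)
    refine le_of_mul_le_mul_right ?_ hpos
    rw [binomTerm_succ_mul x hjn]
    exact mul_le_mul_of_nonneg_left (by linarith) (binomTerm_nonneg hx0 hx1.le n j)
  · rw [binomTerm_eq_zero_of_lt (by omega)]
    exact binomTerm_nonneg hx0 hx1.le n j

lemma binomTerm_le_of_le (hx0 : 0 ≤ x) (hx1 : x < 1) (hjk : j ≤ k) (hk : (k : ℝ) ≤ x * (n + 1)) :
    binomTerm x n j ≤ binomTerm x n k := by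
  induction k, hjk using Nat.le_induction with
  | base => rfl
  | succ k _ ih =>
    push_cast at hk
    exact (ih (by linarith)).trans (binomTerm_le_succ hx0 hx1 hk)

lemma binomTerm_le_of_ge (hx0 : 0 ≤ x) (hx1 : x < 1) (hkj : k ≤ j)
    (hk : x * (n + 1) ≤ k + 1) : binomTerm x n j ≤ binomTerm x n k := by
  induction j, hkj using Nat.le_induction with
  | base => rfl
  | succ j hkj ih =>
    have : (k : ℝ) ≤ j := by exact_mod_cast hkj
    exact (binomTerm_succ_le hx0 hx1 (by linarith)).trans ih

lemma one_le_succ_mul_binomTerm_div (hkn : k < n) :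
    1 ≤ (n + 1) * binomTerm (k / n) n k := by
  have hn : (0 : ℝ) < n := by exact_mod_cast (by omega : 0 < n)
  have hkn' : (k : ℝ) < n := by exact_mod_cast hkn
  have hx0 : 0 ≤ (k / n : ℝ) := by positivity
  have hx1 : (k / n : ℝ) < 1 := (div_lt_one hn).mpr hkn'
  have hmode : (k / n : ℝ) * (n + 1) = k + k / n := by field_simp
  have hmax : ∀ j ∈ range (n + 1), binomTerm (k / n) n j ≤ binomTerm (k / n) n k := by
    intro j _
    rcases le_total j k with hjk | hkj
    · exact binomTerm_le_of_le hx0 hx1 hjk (by rw [hmode]; linarith)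
    · exact binomTerm_le_of_ge hx0 hx1 hkj (by rw [hmode]; linarith)
  calc (1 : ℝ) = ∑ j ∈ range (n + 1), binomTerm (k / n) n j := (sum_range_succ_binomTerm _ n).symm
    _ ≤ ∑ _j ∈ range (n + 1), binomTerm (k / n) n k := sum_le_sum hmax
    _ = (n + 1) * binomTerm (k / n) n k := by simp

end binomTerm

lemma binomTerm_eq_exp_neg_mul_binKL {p : ℝ} (hp0 : 0 < p) (hp1 : p < 1) {n k : ℕ}
    (hk0 : 0 < k) (hkn : k < n) :
    binomTerm p n k = exp (-(n * binKL (k / n) p)) * binomTerm (k / n) n k := by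
  have hn : (0 : ℝ) < n := by exact_mod_cast (by omega : 0 < n)
  set x : ℝ := k / n with hx
  have hx0 : 0 < x := div_pos (by exact_mod_cast hk0) hn
  have hx1 : x < 1 := (div_lt_one hn).mpr (by exact_mod_cast hkn)
  have h1x : 0 < 1 - x := by linarith
  have h1p : 0 < 1 - p := by linarith
  have hnx : (n : ℝ) * x = k := by rw [hx]; field_simp
  have hn1x : (n : ℝ) * (1 - x) = (n - k : ℕ) := by rw [Nat.cast_sub hkn.le, hx]; field_simp
  have hexp : exp (-(n * binKL x p)) = (p / x) ^ k * ((1 - p) / (1 - x)) ^ (n - k) := by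
    have : -(n * binKL x p) = k * log (p / x) + (n - k : ℕ) * log ((1 - p) / (1 - x)) := by
      rw [← hnx, ← hn1x, binKL, log_div hp0.ne' hx0.ne', log_div hx0.ne' hp0.ne',
        log_div h1p.ne' h1x.ne', log_div h1x.ne' h1p.ne']
      ring
    rw [this, exp_add, exp_nat_mul, exp_nat_mul, exp_log (by positivity), exp_log (by positivity)]
  rw [hexp, binomTerm, binomTerm]
  simp only [div_pow]
  field_simp

section binomCDF

variable {x : ℝ} {n k : ℕ}

lemma binomTerm_le_binomCDF (hx0 : 0 ≤ x) (hx1 : x ≤ 1) :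
    binomTerm x n k ≤ binomCDF x n (k + 1) :=
  single_le_sum (fun j _ => binomTerm_nonneg hx0 hx1 n j) (self_mem_range_succ k)

lemma binomCDF_le_succ_mul_binomTerm (hx0 : 0 ≤ x) (hx1 : x < 1) (hk : (k : ℝ) ≤ x * (n + 1)) :
    binomCDF x n (k + 1) ≤ (n + 1) * binomTerm x n k := by
  have hkn : (k : ℝ) ≤ n := by
    have : k < n + 1 := by exact_mod_cast (show (k : ℝ) < n + 1 by nlinarith)
    exact_mod_cast Nat.lt_succ_iff.mp this
  calc binomCDF x n (k + 1) ≤ ∑ _j ∈ range (k + 1), binomTerm x n k :=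
        sum_le_sum fun j hj => binomTerm_le_of_le hx0 hx1 (Nat.lt_succ_iff.mp (mem_range.mp hj)) hk
    _ = (k + 1) * binomTerm x n k := by simp
    _ ≤ (n + 1) * binomTerm x n k :=
        mul_le_mul_of_nonneg_right (by linarith) (binomTerm_nonneg hx0 hx1.le n k)

end binomCDF

lemma abs_neg_log_div_sub_le {S D c t : ℝ} (ht : 0 < t) (hc : 0 < c)
    (hlo : exp (-(t * D)) / c ≤ S) (hhi : S ≤ c * exp (-(t * D))) :
    |-log S / t - D| ≤ log c / t := by
  have hS : 0 < S := lt_of_lt_of_le (by positivity) hlo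
  have hlogS_le : log S ≤ log c - t * D := by
    have := log_le_log hS hhi
    rwa [log_mul hc.ne' (exp_pos _).ne', log_exp, ← sub_eq_add_neg] at this
  have hlogS_ge : -(t * D) - log c ≤ log S := by
    have := log_le_log (by positivity) hlo
    rwa [log_div (exp_pos _).ne' hc.ne', log_exp] at this
  rw [show -log S / t - D = -(log S + t * D) / t by field_simp; ring, abs_div, abs_neg,
    abs_of_pos ht]
  gcongr
  exact abs_le.mpr ⟨by linarith, by linarith⟩

lemma abs_neg_log_binomCDF_div_sub_binKL_le {p : ℝ} (hp0 : 0 < p) (hp1 : p < 1) {n k : ℕ}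
    (hk0 : 0 < k) (hkn : k < n) (hkp : (k : ℝ) ≤ p * (n + 1)) :
    |-log (binomCDF p n (k + 1)) / n - binKL (k / n) p| ≤ log (n + 1) / n := by
  have hn : (0 : ℝ) < n := by exact_mod_cast (by omega : 0 < n)
  have hx1 : (k / n : ℝ) < 1 := (div_lt_one hn).mpr (by exact_mod_cast hkn)
  have htype_lo : 1 / (n + 1) ≤ binomTerm (k / n) n k := by
    rw [div_le_iff₀' (by positivity)]; exact one_le_succ_mul_binomTerm_div hkn
  have htype_hi : binomTerm (k / n) n k ≤ 1 := binomTerm_le_one (by positivity) hx1.le hkn.le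
  have hT := binomTerm_eq_exp_neg_mul_binKL hp0 hp1 hk0 hkn
  refine abs_neg_log_div_sub_le hn (by positivity) ?_ ?_
  · calc exp (-(n * binKL (k / n) p)) / (n + 1)
        = exp (-(n * binKL (k / n) p)) * (1 / (n + 1)) := by ring
      _ ≤ binomTerm p n k := hT ▸ mul_le_mul_of_nonneg_left htype_lo (exp_pos _).le
      _ ≤ binomCDF p n (k + 1) := binomTerm_le_binomCDF hp0.le hp1.le
  · calc binomCDF p n (k + 1) ≤ (n + 1) * binomTerm p n k :=
          binomCDF_le_succ_mul_binomTerm hp0.le hp1 hkp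
      _ ≤ (n + 1) * exp (-(n * binKL (k / n) p)) := by
          rw [hT]; gcongr; exact mul_le_of_le_one_right (exp_pos _).le htype_hi

lemma abs_neg_log_binomCDF_ceil_div_sub_binKL_le {p r : ℝ} (hrp : r < p) (hp1 : p < 1) {n : ℕ}
    (hrn : 1 < r * n) :
    |-log (binomCDF p n ⌈r * n⌉₊) / n - binKL (((⌈r * n⌉₊ - 1 : ℕ) : ℝ) / n) p| ≤
      log (n + 1) / n := by
  have hr0 : 0 < r := pos_of_mul_pos_left (one_pos.trans hrn) n.cast_nonneg
  obtain ⟨k, hk⟩ : ∃ k, ⌈r * n⌉₊ = k + 1 :=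
    Nat.exists_eq_add_one.mpr (Nat.one_le_ceil_iff.mpr (by linarith))
  have hk_ge : r * n ≤ k + 1 := by exact_mod_cast hk ▸ Nat.le_ceil (r * n)
  have hk_lt : (k : ℝ) < r * n := by
    have := Nat.ceil_lt_add_one (by positivity : 0 ≤ r * n)
    rw [hk] at this; push_cast at this; linarith
  have hk0 : 0 < k := by
    have : (0 : ℝ) < k := by linarith
    exact_mod_cast this
  have hkn : k < n := by
    have : (k : ℝ) < n := by nlinarith
    exact_mod_cast this
  rw [hk, Nat.add_sub_cancel]
  exact abs_neg_log_binomCDF_div_sub_binKL_le (hr0.trans hrp) hp1 hk0 hkn (by nlinarith)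

lemma tendsto_log_add_one_div_atTop : Tendsto (fun n : ℕ => log (n + 1) / n) atTop (𝓝 0) := by
  have := (tendsto_pow_log_div_mul_add_atTop 1 (-1) 1 one_ne_zero).comp
    (tendsto_atTop_add_const_right atTop 1 (tendsto_natCast_atTop_atTop (R := ℝ)))
  simpa [Function.comp_def] using this

lemma tendsto_natCeil_mul_sub_one_div {r : ℝ} (hr : 0 < r) :
    Tendsto (fun n : ℕ => ((⌈r * n⌉₊ - 1 : ℕ) : ℝ) / n) atTop (𝓝 r) := by
  have h := ((tendsto_nat_ceil_mul_div_atTop hr.le).comp tendsto_natCast_atTop_atTop).sub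
    tendsto_one_div_atTop_nhds_zero_nat
  rw [sub_zero] at h
  refine h.congr' ?_
  filter_upwards [eventually_gt_atTop 0] with n hn
  have h1 : 1 ≤ ⌈r * n⌉₊ := Nat.one_le_ceil_iff.mpr (by positivity)
  simp [Nat.cast_sub h1, sub_div]

lemma continuousAt_binKL {p r : ℝ} (hp0 : 0 < p) (hp1 : p < 1) (hr0 : 0 < r) (hr1 : r < 1) :
    ContinuousAt (fun x => binKL x p) r := by
  unfold binKL
  fun_prop (disch := first | positivity | (apply ne_of_gt; apply div_pos <;> linarith))

/-- Large-deviation lower tail of a Binomial(n,p): for `0 < r < p < 1`,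
`-lim (1/n) log P(E[n] ≤ ⌈rn⌉ - 1) = D(r‖p)`, where
`P(E[n] ≤ ⌈rn⌉ - 1) = ∑_{k=0}^{⌈rn⌉-1} C(n,k) p^k (1-p)^{n-k}`. -/
theorem stmt1 (p r : ℝ) (hr0 : 0 < r) (hrp : r < p) (hp1 : p < 1) :
    Tendsto (fun n : ℕ =>
        -(Real.log (∑ k ∈ Finset.range ⌈r * (n : ℝ)⌉₊,
            (n.choose k : ℝ) * p ^ k * (1 - p) ^ (n - k)) / n)) atTop
      (nhds (r * Real.log (r / p) + (1 - r) * Real.log ((1 - r) / (1 - p)))) := by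
  have hD : Tendsto (fun n : ℕ => binKL (((⌈r * n⌉₊ - 1 : ℕ) : ℝ) / n) p) atTop
      (𝓝 (binKL r p)) :=
    (continuousAt_binKL (hr0.trans hrp) hp1 hr0 (hrp.trans hp1)).tendsto.comp
      (tendsto_natCeil_mul_sub_one_div hr0)
  have herr : Tendsto (fun n : ℕ => -log (binomCDF p n ⌈r * n⌉₊) / n -
      binKL (((⌈r * n⌉₊ - 1 : ℕ) : ℝ) / n) p) atTop (𝓝 0) := by
    refine squeeze_zero_norm' ?_ tendsto_log_add_one_div_atTop
    filter_upwards [(tendsto_natCast_atTop_atTop.const_mul_atTop hr0).eventually_gt_atTop 1]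
      with n hn
    exact abs_neg_log_binomCDF_ceil_div_sub_binKL_le hrp hp1 hn
  have hlim := herr.add hD
  simp only [sub_add_cancel, zero_add, neg_div] at hlim
  exact hlim
end

section
/- Consider the Markov chain on states {−1, 0, 1, 2, ...} ∪ {1', 2', ...} with transition probabilities determined by a = p₁p₂, b = p₁(1−p₂), c = (1−p₁)p₂, d = (1−p₁)(1−p₂): from state i ≥ 1, stay with prob. a+d, go to i+1 with prob. b, go to i' with prob. c; from i', go to i−1 with prob. a, to (i−1)' (or 0 if i=1) with prob. c, stay with prob. b+d; from 0, go to 1 with prob. b, to −1 with prob. c, stay with prob. a+d; from −1, go to 0 with prob. a+b, stay with prob. c+d. The stationary distribution, when it exists, satisfies π_i/π_{i−1} = b/c for i ≥ 2 and π'_i/π_i = c/(a+c) for i ≥ 1; in particular the chain is positive recurrent with a unique stationary distribution if and only if b < c, equivalently p₁ < p₂. -/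
/-- Steady state of the priority-to-U₁ Markov chain on states `{-1,0,1,…} ∪ {1',2',…}`:
any positive solution of the balance equations satisfies `π_i/π_{i-1} = b/c` for `i ≥ 2`
and `π'_i/π_i = c/(a+c)` for `i ≥ 1`; the chain is positive recurrent with a unique
stationary distribution (the solution is summable) iff `b < c`, equivalently `p₁ < p₂`. -/
theorem stmt12 (p₁ p₂ : ℝ) (hp₁ : 0 < p₁ ∧ p₁ < 1) (hp₂ : 0 < p₂ ∧ p₂ < 1)
    (a b c d : ℝ) (ha : a = p₁ * p₂) (hb : b = p₁ * (1 - p₂))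
    (hc : c = (1 - p₁) * p₂) (hd : d = (1 - p₁) * (1 - p₂))
    (πm1 : ℝ) (π π' : ℕ → ℝ)
    (hposm1 : 0 < πm1) (hpos : ∀ i, 0 < π i) (hpos' : ∀ i, 1 ≤ i → 0 < π' i)
    (heq1 : ∀ i, 1 ≤ i → (1 - a - d) * π i = b * (π (i - 1) + π' i) + a * π' (i + 1))
    (heq2 : ∀ i, 1 ≤ i → (1 - d) * π' i = c * (π i + π' (i + 1)))
    (heq3 : (1 - c - d) * πm1 = c * (π 0 + π' 1))
    (heq4 : (1 - a - d) * π 0 = a * π' 1 + (a + b) * πm1) :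
    (∀ i, 2 ≤ i → π i / π (i - 1) = b / c) ∧
      (∀ i, 1 ≤ i → π' i / π i = c / (a + c)) ∧
      (Summable π ↔ b < c) ∧
      (b < c ↔ p₁ < p₂) := by
  obtain ⟨hp1, hp1'⟩ := hp₁
  obtain ⟨hp2, hp2'⟩ := hp₂
  have ha0 : 0 < a := ha ▸ mul_pos hp1 hp2
  have hb0 : 0 < b := hb ▸ mul_pos hp1 (by linarith)
  have hc0 : 0 < c := hc ▸ mul_pos (by linarith) hp2
  have h1d : (1:ℝ) - d = a + b + c := by rw [ha, hb, hc, hd]; ring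
  have h1ad : (1:ℝ) - a - d = b + c := by rw [ha, hb, hc, hd]; ring
  have h1cd : (1:ℝ) - c - d = a + b := by rw [ha, hb, hc, hd]; ring
  rw [h1cd] at heq3
  rw [h1ad] at heq4
  have heq1' : ∀ i, 1 ≤ i → (b + c) * π i = b * (π (i - 1) + π' i) + a * π' (i + 1) := by
    intro i hi; rw [← h1ad]; exact heq1 i hi
  have heq2' : ∀ i, 1 ≤ i → (a + b + c) * π' i = c * (π i + π' (i + 1)) := by
    intro i hi; rw [← h1d]; exact heq2 i hi
  have hs0 : (0:ℝ) < a + b + c := by linarith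
  have hac0 : (0:ℝ) < a + c := by linarith
  have hb1 : (a + c) * π' 1 = b * π 0 := by linear_combination -heq4 - heq3
  have step1 : ∀ i, (a + c) * π' (i + 1) = b * π i → c * π (i + 1) = b * π i := by
    intro i h
    have hA := heq1' (i + 1) (Nat.le_add_left 1 i)
    simp only [Nat.add_sub_cancel] at hA
    have hB := heq2' (i + 1) (Nat.le_add_left 1 i)
    have key : (a + b + c) * (c * π (i + 1)) = (a + b + c) * (b * π i) := by
      linear_combination c * hA - a * hB + (a + b) * h
    exact mul_left_cancel₀ hs0.ne' key
  have step2 : ∀ i, (a + c) * π' (i + 1) = b * π i →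
      (a + c) * π' (i + 2) = b * π (i + 1) := by
    intro i h
    have hc1 : c * π (i + 1) = b * π i := step1 i h
    have hac1 : (a + c) * π' (i + 1) = c * π (i + 1) := by rw [h, hc1]
    have hB := heq2' (i + 1) (Nat.le_add_left 1 i)
    have key : c * ((a + c) * π' (i + 2)) = c * (b * π (i + 1)) := by
      linear_combination (-(a + c)) * hB + (a + b + c) * hac1
    exact mul_left_cancel₀ hc0.ne' key
  have main : ∀ i, (a + c) * π' (i + 1) = b * π i := by
    intro i
    induction i with
    | zero => exact hb1
    | succ n ih => exact step2 n ih
  have ratio : ∀ i, c * π (i + 1) = b * π i := fun i => step1 i (main i)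
  have prat : ∀ i, (a + c) * π' (i + 1) = c * π (i + 1) :=
    fun i => (main i).trans (ratio i).symm
  refine ⟨?_, ?_, ?_, ?_⟩
  · intro i hi
    obtain ⟨j, rfl⟩ : ∃ j, i = j + 2 := ⟨i - 2, by omega⟩
    show π (j + 2) / π (j + 1) = b / c
    rw [div_eq_div_iff (hpos _).ne' hc0.ne']
    linear_combination ratio (j + 1)
  · intro i hi
    obtain ⟨j, rfl⟩ : ∃ j, i = j + 1 := ⟨i - 1, by omega⟩
    rw [div_eq_div_iff (hpos _).ne' hac0.ne']
    linear_combination prat j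
  · have hgeo : ∀ i, π i = π 0 * (b / c) ^ i := by
      intro i
      induction i with
      | zero => simp
      | succ n ih =>
        have h1 : π (n + 1) = (b / c) * π n := by
          rw [div_mul_eq_mul_div, eq_div_iff hc0.ne']
          linear_combination ratio n
        rw [h1, ih]; ring
    have hπeq : π = fun i => π 0 * (b / c) ^ i := funext hgeo
    constructor
    · intro hsum
      rw [hπeq] at hsum
      have hg : Summable fun i : ℕ => (b / c) ^ i :=
        (summable_mul_left_iff (hpos 0).ne').mp hsum
      have := summable_geometric_iff_norm_lt_one.mp hg
      rw [Real.norm_eq_abs, abs_of_pos (div_pos hb0 hc0)] at this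
      exact (div_lt_one hc0).mp this
    · intro hbc
      rw [hπeq]
      exact (summable_geometric_of_lt_one (div_pos hb0 hc0).le
        ((div_lt_one hc0).mpr hbc)).mul_left _
  · rw [hb, hc]
    constructor <;> intro h <;> nlinarith
end

section
/- Let a = p₁p₂, b = p₁(1−p₂), c = (1−p₁)p₂, d = (1−p₁)(1−p₂) with p₁,p₂ ∈ (0,1). The 5×5 stochastic matrix A with rows [d, b, 0, 0, a+c], [0, a+b+d, c, 0, 0], [0, b, d, 0, a+c], [a+b, 0, 0, c+d, 0], [0, 0, 0, 0, 1] has second-largest eigenvalue ξ₂ = max(1−p₁, ((1−c+d) + √((1−c+d)² + 4(bc+cd−d)))/2). -/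
/-!
The characteristic polynomial of `A` factors as `(z - 1) (z - (c + d)) (z - d) q(z)` with
`q(z) = (z - (a + b + d)) (z - d) - b c`. When `a + b + c + d = 1` the discriminant of `q` is
`s² = (a + b)² + 4 b c ≥ 0`, so `q` has the real roots `(1 - c + d ± s) / 2`. For nonnegative
`a, b, c, d` the larger root dominates both `d` and the absolute value of the smaller root, hence
the largest modulus of an eigenvalue other than `1` is `max (c + d) ((1 - c + d + s) / 2)`.
-/

open Matrix

def secondaryChainMatrix {R : Type*} [Add R] [Zero R] [One R] (a b c d : R) :
    Matrix (Fin 5) (Fin 5) R :=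
  !![d, b, 0, 0, a + c;
     0, a + b + d, c, 0, 0;
     0, b, d, 0, a + c;
     a + b, 0, 0, c + d, 0;
     0, 0, 0, 0, 1]

theorem det_scalar_sub_secondaryChainMatrix {R : Type*} [CommRing R] (z a b c d : R) :
    (scalar (Fin 5) z - secondaryChainMatrix a b c d).det
      = (z - 1) * (z - (c + d)) * (z - d) * ((z - (a + b + d)) * (z - d) - b * c) := by
  simp [secondaryChainMatrix, det_succ_row_zero, Fin.sum_univ_succ, Fin.succAbove]
  ring

theorem secondaryChainMatrix_map {R S : Type*} [CommRing R] [CommRing S] (f : R →+* S)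
    (a b c d : R) :
    (secondaryChainMatrix a b c d).map f = secondaryChainMatrix (f a) (f b) (f c) (f d) := by
  ext i j
  fin_cases i <;> fin_cases j <;> simp [secondaryChainMatrix]

theorem spectrum_secondaryChainMatrix {K : Type*} [Field K] {a b c d l m : K}
    (hsum : l + m = a + b + 2 * d) (hprod : l * m = (a + b + d) * d - b * c) :
    spectrum K (secondaryChainMatrix a b c d) = {1, c + d, d, l, m} := by
  ext z
  have hquad : (z - (a + b + d)) * (z - d) - b * c = (z - l) * (z - m) := by
    linear_combination z * hsum - hprod
  simp only [mem_spectrum_iff_isRoot_charpoly, Polynomial.IsRoot.def, eval_charpoly,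
    det_scalar_sub_secondaryChainMatrix, hquad, mul_eq_zero, sub_eq_zero, Set.mem_insert_iff,
    Set.mem_singleton_iff, or_assoc]

theorem spectrum_map_ofReal_secondaryChainMatrix {a b c d l m : ℝ}
    (hsum : l + m = a + b + 2 * d) (hprod : l * m = (a + b + d) * d - b * c) :
    spectrum ℂ ((secondaryChainMatrix a b c d).map Complex.ofReal) =
      Complex.ofReal '' {1, c + d, d, l, m} := by
  have hsumC : (l + m : ℂ) = a + b + 2 * d := by exact_mod_cast congrArg Complex.ofReal hsum
  have hprodC : (l * m : ℂ) = (a + b + d) * d - b * c := by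
    exact_mod_cast congrArg Complex.ofReal hprod
  rw [show (secondaryChainMatrix a b c d).map Complex.ofReal = secondaryChainMatrix (a : ℂ) b c d
    from secondaryChainMatrix_map Complex.ofRealHom a b c d,
    spectrum_secondaryChainMatrix hsumC hprodC]
  simp [Set.image_insert_eq]

theorem secondaryChainMatrix_secondEigenvalue {a b c d : ℝ} (ha : 0 ≤ a) (hb : 0 ≤ b)
    (hc : 0 ≤ c) (hd : 0 ≤ d) (hsum : a + b + c + d = 1) :
    let ξ := max (c + d) ((1 - c + d + √((1 - c + d) ^ 2 + 4 * (b * c + c * d - d))) / 2)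
    (ξ : ℂ) ∈ spectrum ℂ ((secondaryChainMatrix a b c d).map Complex.ofReal) ∧
      ∀ z ∈ spectrum ℂ ((secondaryChainMatrix a b c d).map Complex.ofReal), z ≠ 1 → ‖z‖ ≤ ξ := by
  set s := √((1 - c + d) ^ 2 + 4 * (b * c + c * d - d))
  intro ξ
  have hdisc : (1 - c + d) ^ 2 + 4 * (b * c + c * d - d) = (a + b) ^ 2 + 4 * (b * c) := by
    linear_combination (c + d - 1 - a - b) * hsum
  have hs0 : 0 ≤ s := Real.sqrt_nonneg _
  have hs2 : s ^ 2 = (a + b) ^ 2 + 4 * (b * c) := by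
    rw [Real.sq_sqrt (hdisc ▸ by positivity), hdisc]
  have hab : a + b ≤ s := by nlinarith [mul_nonneg hb hc]
  rw [spectrum_map_ofReal_secondaryChainMatrix (l := (1 - c + d + s) / 2)
    (m := (1 - c + d - s) / 2) (by linear_combination -hsum)
    (by linear_combination (-1 / 4 : ℝ) * hs2 - ((1 - c + d + a + b) / 4 + d / 2) * hsum)]
  constructor
  · refine ⟨ξ, ?_, rfl⟩
    rcases max_choice (c + d) ((1 - c + d + s) / 2) with h | h <;> simp [ξ, h]
  · rintro _ ⟨x, hx, rfl⟩ hx1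
    rw [Complex.norm_real, Real.norm_eq_abs]
    rcases hx with rfl | rfl | rfl | rfl | rfl
    · exact absurd Complex.ofReal_one hx1
    · exact (abs_of_nonneg (by positivity)).trans_le (le_max_left _ _)
    all_goals exact le_max_of_le_right (abs_le.2 ⟨by linarith, by linarith⟩)

/-- The 5×5 transition matrix of the absorbing chain for the secondary user's
inter-delivery exponent has second-largest eigenvalue
`ξ₂ = max(1-p₁, ((1-c+d) + √((1-c+d)² + 4(bc+cd-d)))/2)`. -/
theorem stmt15 (p₁ p₂ : ℝ) (hp₁ : 0 < p₁ ∧ p₁ < 1) (hp₂ : 0 < p₂ ∧ p₂ < 1)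
    (a b c d : ℝ) (ha : a = p₁ * p₂) (hb : b = p₁ * (1 - p₂))
    (hc : c = (1 - p₁) * p₂) (hd : d = (1 - p₁) * (1 - p₂)) :
    let A : Matrix (Fin 5) (Fin 5) ℝ :=
      !![d, b, 0, 0, a + c;
         0, a + b + d, c, 0, 0;
         0, b, d, 0, a + c;
         a + b, 0, 0, c + d, 0;
         0, 0, 0, 0, 1]
    let ξ₂ : ℝ :=
      max (1 - p₁) ((1 - c + d + Real.sqrt ((1 - c + d) ^ 2 + 4 * (b * c + c * d - d))) / 2)
    (ξ₂ : ℂ) ∈ spectrum ℂ (A.map (Complex.ofReal)) ∧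
      ∀ z ∈ spectrum ℂ (A.map (Complex.ofReal)), z ≠ 1 → ‖z‖ ≤ ξ₂ := by
  obtain ⟨hp₁0, hp₁1⟩ := hp₁
  obtain ⟨hp₂0, hp₂1⟩ := hp₂
  have hcd : c + d = 1 - p₁ := by rw [hc, hd]; ring
  have key := secondaryChainMatrix_secondEigenvalue
    (ha ▸ mul_nonneg hp₁0.le hp₂0.le) (hb ▸ mul_nonneg hp₁0.le (sub_nonneg.2 hp₂1.le))
    (hc ▸ mul_nonneg (sub_nonneg.2 hp₁1.le) hp₂0.le)
    (hd ▸ mul_nonneg (sub_nonneg.2 hp₁1.le) (sub_nonneg.2 hp₂1.le))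
    (by rw [ha, hb, hc, hd]; ring)
  rw [hcd] at key
  exact key
end

section
/- For all p ∈ (0,1), the point P₂ = ((1-(1-p)² + p)/3, -(2/3)log(1-p)) lies strictly above the line segment joining P₁ = ((1-(1-p) + 2p)/3, -(1/3)log(1-p)) = (p, -(1/3)log(1-p)) and P₄ = ((1-(1-p)³)/3, -log(1-p)) in the (τ,λ) plane; i.e., the a=2 scheme improves the convex hull of the a=1 and a=3 schemes for block size d=3. -/
/-! `λ` is linear in `a`, so `P₂` sits halfway between `P₁` and `P₄` in `λ`; but in throughput it
is only the fraction `1 / (3 - p) < 1 / 2` of the way from `P₁` to `P₄`, and `λ` increases along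
the chord since `log (1 - p) < 0`. -/

lemma throughput_fraction_eq_inv (p : ℝ) (hp : p ≠ 0) :
    ((1 - (1 - p) ^ 2 + 1 * p) / 3 - (1 - (1 - p) ^ 1 + 2 * p) / 3) /
        ((1 - (1 - p) ^ 3 + 0 * p) / 3 - (1 - (1 - p) ^ 1 + 2 * p) / 3) = (3 - p)⁻¹ := by
  have hnum : (1 - (1 - p) ^ 2 + 1 * p) / 3 - (1 - (1 - p) ^ 1 + 2 * p) / 3 = -p ^ 2 / 3 := by
    ring
  have hden : (1 - (1 - p) ^ 3 + 0 * p) / 3 - (1 - (1 - p) ^ 1 + 2 * p) / 3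
      = -p ^ 2 * (3 - p) / 3 := by
    ring
  rw [hnum, hden, div_div_div_cancel_right₀ (by norm_num), neg_mul,
    neg_div_neg_eq, div_mul_cancel_left₀ (pow_ne_zero 2 hp)]

lemma chord_lt_of_lt_half {ℓ t : ℝ} (hℓ : ℓ < 0) (ht : t < 1 / 2) :
    -(1 / 3) * ℓ + (-ℓ - -(1 / 3) * ℓ) * t < -(2 / 3) * ℓ := by
  have hgap : -(1 / 3) * ℓ + (-ℓ - -(1 / 3) * ℓ) * t - -(2 / 3) * ℓ = 2 / 3 * ℓ * (1 / 2 - t) := by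
    ring
  have : 2 / 3 * ℓ * (1 / 2 - t) < 0 := mul_neg_of_neg_of_pos (by linarith) (by linarith)
  linarith

/-- For every `p ∈ (0,1)`, the point `P₂ = (τ(2), λ(2))` of the `a = 2` block-size-3
scheme lies strictly above the segment joining `P₁ = (τ(1), λ(1)) = (p, -(1/3)log(1-p))`
and `P₄ = (τ(3), λ(3)) = ((1-(1-p)³)/3, -log(1-p))`, where
`τ(a) = (1-(1-p)^a + (3-a)p)/3` and `λ(a) = -(a/3)log(1-p)`. -/
theorem stmt17 (p : ℝ) (hp0 : 0 < p) (hp1 : p < 1) :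
    (-(1 / 3) * Real.log (1 - p)) +
        ((-Real.log (1 - p)) - (-(1 / 3) * Real.log (1 - p))) *
          (((1 - (1 - p) ^ 2 + 1 * p) / 3 - (1 - (1 - p) ^ 1 + 2 * p) / 3) /
            ((1 - (1 - p) ^ 3 + 0 * p) / 3 - (1 - (1 - p) ^ 1 + 2 * p) / 3)) <
      -(2 / 3) * Real.log (1 - p) := by
  rw [throughput_fraction_eq_inv p hp0.ne']
  have hlog : Real.log (1 - p) < 0 := Real.log_neg (by linarith) (by linarith)
  have hfraction : (3 - p)⁻¹ < 1 / 2 := by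
    rw [one_div]
    exact inv_strictAnti₀ (by norm_num) (by linarith)
  exact chord_lt_of_lt_half hlog hfraction
end

section
/- For all p ∈ (0,1), the point ((3p − p³)/3, −(1/3)log((1−p)²(1+p))) lies on or below the piecewise-linear upper envelope of the three points ((1−(1−p)^a + (3−a)p)/3, −(a/3)log(1−p)) for a = 1, 2, 3 in the (τ,λ) plane. -/
/-!
Weighting the points `a = 1` and `a = 2` by `1 - p` and `p` reproduces the throughput `p - p³/3`
of the scheme exactly. Both sides of the rate comparison are multiples of `log (1 - p)` except
for the term `log (1 + p)`, so the claim reduces to `0 ≤ log (1 + p) + (1 - p) log (1 - p)`. That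
function vanishes at `0` and has derivative `1/(1+p) - 1 - log (1 - p) ≥ 1/(1+p) - 1 + p ≥ 0`.
-/

open Real Set

lemma hasDerivAt_log_one_add_add_one_sub_mul_log {x : ℝ} (hx : x ∈ Ioo (-1 : ℝ) 1) :
    HasDerivAt (fun p ↦ log (1 + p) + (1 - p) * log (1 - p))
      (1 / (1 + x) - log (1 - x) - 1) x := by
  have hplus : HasDerivAt (fun p : ℝ ↦ 1 + p) 1 x := (hasDerivAt_id x).const_add 1
  have hminus : HasDerivAt (fun p : ℝ ↦ 1 - p) (-1) x := by
    simpa using (hasDerivAt_id x).const_sub 1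
  have hne : 1 - x ≠ 0 := by linarith [hx.2]
  refine ((hplus.log (by linarith [hx.1])).add (hminus.mul (hminus.log hne))).congr_deriv ?_
  field_simp
  ring

lemma one_div_one_add_sub_log_one_sub_sub_one_nonneg {x : ℝ} (hx : x ∈ Ioo (-1 : ℝ) 1) :
    0 ≤ 1 / (1 + x) - log (1 - x) - 1 := by
  have hlog : log (1 - x) ≤ -x := by
    linarith [log_le_sub_one_of_pos (by linarith [hx.2] : 0 < 1 - x)]
  have hinv : 1 - x ≤ 1 / (1 + x) := by
    rw [le_div_iff₀ (by linarith [hx.1])]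
    nlinarith [sq_nonneg x]
  linarith

lemma monotoneOn_log_one_add_add_one_sub_mul_log :
    MonotoneOn (fun p ↦ log (1 + p) + (1 - p) * log (1 - p)) (Ioo (-1 : ℝ) 1) := by
  refine monotoneOn_of_hasDerivWithinAt_nonneg (f' := fun x ↦ 1 / (1 + x) - log (1 - x) - 1)
    (convex_Ioo _ _)
    (fun x hx ↦ (hasDerivAt_log_one_add_add_one_sub_mul_log hx).continuousAt.continuousWithinAt)
    (fun x hx ↦ ?_) (fun x hx ↦ ?_) <;> rw [interior_Ioo] at hx
  · exact (hasDerivAt_log_one_add_add_one_sub_mul_log hx).hasDerivWithinAt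
  · exact one_div_one_add_sub_log_one_sub_sub_one_nonneg hx

lemma neg_one_sub_mul_log_one_sub_le_log_one_add {p : ℝ} (hp0 : 0 ≤ p) (hp1 : p < 1) :
    -((1 - p) * log (1 - p)) ≤ log (1 + p) := by
  have hmono := monotoneOn_log_one_add_add_one_sub_mul_log (by norm_num) ⟨by linarith, hp1⟩ hp0
  norm_num at hmono
  linarith

/-- For all `p ∈ (0,1)`, the trade-off point `((3p - p³)/3, -(1/3)log((1-p)²(1+p)))` of
the scheme `x = [1,2,0]` lies on or below the piecewise-linear upper envelope of the
three points `((1-(1-p)^a + (3-a)p)/3, -(a/3)log(1-p))`, `a = 1,2,3`: it is dominated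
by a convex combination of those points with the same throughput. -/
theorem stmt18 (p : ℝ) (hp0 : 0 < p) (hp1 : p < 1) :
    ∃ w₁ w₂ w₃ : ℝ, 0 ≤ w₁ ∧ 0 ≤ w₂ ∧ 0 ≤ w₃ ∧ w₁ + w₂ + w₃ = 1 ∧
      w₁ * ((1 - (1 - p) ^ 1 + 2 * p) / 3) + w₂ * ((1 - (1 - p) ^ 2 + 1 * p) / 3) +
          w₃ * ((1 - (1 - p) ^ 3 + 0 * p) / 3) = (3 * p - p ^ 3) / 3 ∧
      -(1 / 3) * Real.log ((1 - p) ^ 2 * (1 + p)) ≤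
        w₁ * (-(1 / 3) * Real.log (1 - p)) + w₂ * (-(2 / 3) * Real.log (1 - p)) +
          w₃ * (-Real.log (1 - p)) := by
  refine ⟨1 - p, p, 0, by linarith, hp0.le, le_rfl, by ring, by ring, ?_⟩
  have hkey := neg_one_sub_mul_log_one_sub_le_log_one_add hp0.le hp1
  rw [log_mul (pow_ne_zero 2 (by linarith)) (by linarith), log_pow]
  push_cast
  linarith
end
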